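/- Let (V,ρ) be an anchored A-module with V finitely generated and projective over A, and let M be any A-module. Then the A-linear dual of the Atiyah sequence of M is isomorphic, as a short exact sequence of A-modules, to the sequence 0 → V^* ⊗_A M^* → Σ_V^* ⊗_A M^* → M^* → 0, where Σ_V^* ⊗_A M^* is balanced against the (natural) right A-action on Σ_V^* and carries the A-module structure coming from the twisted left A-action on Σ_V^*, the first map is θ⊗δ ↦ (θ,0)⊗δ, and the second map is induced by (θ,a) ↦ a (namely (θ,a)⊗δ ↦ a•δ). -/

import Mathlib

open TensorProduct

universe u

/-!
The comparison map `Σ_V^* ⊗ M^* → (Σ_V ⊗ M)^*` is the pairing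
`⟨(θ, b) ⊗ δ, (a, v) ⊗ m⟩ = a b δ(m) + ρ(v)(b δ(m)) - θ(v) δ(m)`; the sign of the last term is
the one that makes it linear for the twisted left action on `Σ_V^*`. It restricts to
`-dualDistrib` on `V^* ⊗ M^*` and induces the identity on `M^*`. Both rows are exact by
elementary arguments: `Σ_V^* ⊗ M^*` splits additively as `(V^* ⊗ M^*) ⊕ M^*`, a functional on
`Σ_V ⊗ M` killing `M` descends to `V ⊗ M`, and `(0, 1) ⊗ δ` pairs to a functional extending `δ`.
As `V` is finitely generated projective, `dualDistrib` is bijective, and the five lemma makes the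
pairing bijective.
-/

/-- For an anchored `A`-module `(V, ρ)` and `a ∈ A`, the `A`-linear form
`ρ^*(da) : V → A`, `v ↦ ρ(v)(a)`. -/
def rhoStar {k A V : Type*} [CommRing k] [CommRing A] [Algebra k A]
    [AddCommGroup V] [Module A V] (ρ : V →ₗ[A] Derivation k A A) (a : A) :
    V →ₗ[A] A where
  toFun v := ρ v a
  map_add' v w := by simp
  map_smul' c v := by simp

open Module

theorem TensorProduct.dualDistrib_bijective {R M N : Type*} [CommRing R] [AddCommGroup M]
    [Module R M] [AddCommGroup N] [Module R N] [Module.Finite R M] [Module.Projective R M] :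
    Function.Bijective (dualDistrib R M N) := by
  have : dualDistrib R M N =
      (lift.equiv (.id R) M N R).toLinearMap ∘ₗ dualTensorHom R M (Dual R N) := by
    ext θ δ m n
    simp
  rw [this, LinearMap.coe_comp]
  exact (LinearEquiv.bijective _).comp dualTensorHom_bijective

theorem LinearMap.bijective_of_shortExact_of_bijective_of_bijective {R : Type*} [CommRing R]
    {M₁ M₂ M₃ N₁ N₂ N₃ : Type*} [AddCommGroup M₁] [AddCommGroup M₂] [AddCommGroup M₃]
    [AddCommGroup N₁] [AddCommGroup N₂] [AddCommGroup N₃] [Module R M₁] [Module R M₂]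
    [Module R M₃] [Module R N₁] [Module R N₂] [Module R N₃]
    {f₁ : M₁ →ₗ[R] M₂} {f₂ : M₂ →ₗ[R] M₃} {g₁ : N₁ →ₗ[R] N₂} {g₂ : N₂ →ₗ[R] N₃}
    {i₁ : M₁ →ₗ[R] N₁} {i₂ : M₂ →ₗ[R] N₂} {i₃ : M₃ →ₗ[R] N₃}
    (hc₁ : g₁ ∘ₗ i₁ = i₂ ∘ₗ f₁) (hc₂ : g₂ ∘ₗ i₂ = i₃ ∘ₗ f₂)
    (hf : Function.Injective f₁ ∧ Function.Exact f₁ f₂ ∧ Function.Surjective f₂)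
    (hg : Function.Injective g₁ ∧ Function.Exact g₁ g₂ ∧ Function.Surjective g₂)
    (hi₁ : Function.Bijective i₁) (hi₃ : Function.Bijective i₃) : Function.Bijective i₂ :=
  bijective_of_surjective_of_bijective_of_bijective_of_injective (0 : Unit →ₗ[R] M₁) f₁ f₂ 0
    (0 : Unit →ₗ[R] N₁) g₁ g₂ 0 0 i₁ i₂ i₃ (0 : Unit →ₗ[R] Unit) (by simp) hc₁ hc₂ (by simp)
    ((exact_zero_iff_injective _ _).2 hf.1) hf.2.1 ((exact_zero_iff_surjective _ _).2 hf.2.2)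
    ((exact_zero_iff_injective _ _).2 hg.1) hg.2.1 ((exact_zero_iff_surjective _ _).2 hg.2.2)
    (fun _ => ⟨0, Subsingleton.elim _ _⟩) hi₁ hi₃ fun _ _ _ => Subsingleton.elim _ _

theorem TensorProduct.surjective_of_tmul_mem_range {R M N P : Type*} [CommRing R]
    [AddCommGroup M] [Module R M] [AddCommGroup N] [Module R N] [AddCommGroup P] [Module R P]
    {f : P →ₗ[R] M ⊗[R] N} (hf : ∀ m n, m ⊗ₜ n ∈ LinearMap.range f) :
    Function.Surjective f := by
  rw [← LinearMap.range_eq_top, eq_top_iff, ← span_tmul_eq_top, Submodule.span_le]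
  rintro _ ⟨m, n, rfl⟩
  exact hf m n

section AtiyahTensor

variable {k A V M T : Type u} [CommRing k] [CommRing A] [Algebra k A]
  [AddCommGroup V] [Module A V] [AddCommGroup M] [Module A M] [AddCommGroup T] [Module A T]

/-- `tt s m` models `s ⊗ m` in `Σ_V ⊗_A M`, with the `A`-module structure coming from the left
action on `Σ_V`. -/
structure IsAtiyahTensor (ρ : V →ₗ[A] Derivation k A A) (tt : A × V → M → T) : Prop where
  add_left : ∀ s s' m, tt (s + s') m = tt s m + tt s' m
  add_right : ∀ s m m', tt s (m + m') = tt s m + tt s m'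
  balanced : ∀ (b a : A) (v : V) (m : M), tt (b * a + ρ v a, a • v) m = tt (b, v) (a • m)
  smul : ∀ (a b : A) (v : V) (m : M), a • tt (b, v) m = tt (a * b, a • v) m
  exists_unique_lift : ∀ (N : Type u) [AddCommGroup N] (f : A × V → M → N),
    (∀ s s' m, f (s + s') m = f s m + f s' m) → (∀ s m m', f s (m + m') = f s m + f s m') →
    (∀ (b a : A) (v : V) (m : M), f (b * a + ρ v a, a • v) m = f (b, v) (a • m)) →
    ∃! F : T →+ N, ∀ s m, F (tt s m) = f s m

namespace IsAtiyahTensor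

variable {ρ : V →ₗ[A] Derivation k A A} {tt : A × V → M → T}

theorem addMonoidHom_ext (h : IsAtiyahTensor ρ tt) {N : Type u} [AddCommGroup N]
    {F₁ F₂ : T →+ N} (hF : ∀ s m, F₁ (tt s m) = F₂ (tt s m)) : F₁ = F₂ := by
  obtain ⟨F, -, huniq⟩ := h.exists_unique_lift N (fun s m => F₂ (tt s m))
    (fun s s' m => by rw [h.add_left, map_add]) (fun s m m' => by rw [h.add_right, map_add])
    (fun b a v m => by rw [h.balanced])
  exact (huniq F₁ hF).trans (huniq F₂ fun _ _ => rfl).symm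

theorem linearMap_ext (h : IsAtiyahTensor ρ tt) {N : Type u} [AddCommGroup N] [Module A N]
    {F₁ F₂ : T →ₗ[A] N} (hF : ∀ s m, F₁ (tt s m) = F₂ (tt s m)) : F₁ = F₂ :=
  LinearMap.toAddMonoidHom_injective (h.addMonoidHom_ext hF)

theorem exists_linearMap (h : IsAtiyahTensor ρ tt) {N : Type u} [AddCommGroup N] [Module A N]
    (f : A × V → M → N) (add_left : ∀ s s' m, f (s + s') m = f s m + f s' m)
    (add_right : ∀ s m m', f s (m + m') = f s m + f s m')
    (balanced : ∀ (b a : A) (v : V) (m : M), f (b * a + ρ v a, a • v) m = f (b, v) (a • m))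
    (smul : ∀ (a b : A) (v : V) (m : M), f (a * b, a • v) m = a • f (b, v) m) :
    ∃ F : T →ₗ[A] N, ∀ s m, F (tt s m) = f s m := by
  obtain ⟨F, hF, -⟩ := h.exists_unique_lift N f add_left add_right balanced
  have map_smul (a : A) : F.comp (DistribSMul.toAddMonoidHom T a) =
      (DistribSMul.toAddMonoidHom N a).comp F :=
    h.addMonoidHom_ext fun ⟨b, v⟩ m => by simp [h.smul, hF, smul]
  exact ⟨{ F with map_smul' := fun a t => DFunLike.congr_fun (map_smul a) t }, hF⟩

theorem tt_mk_zero (h : IsAtiyahTensor ρ tt) (a : A) (m : M) :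
    tt (a, 0) m = tt (1, 0) (a • m) := by
  simpa using h.balanced 1 a 0 m

def unit (h : IsAtiyahTensor ρ tt) : M →ₗ[A] T where
  toFun m := tt (1, 0) m
  map_add' := h.add_right _
  map_smul' a m := by rw [← h.tt_mk_zero, RingHom.id_apply, h.smul, mul_one, smul_zero]

theorem unit_apply (h : IsAtiyahTensor ρ tt) (m : M) : h.unit m = tt (1, 0) m := rfl

theorem tt_eq_unit_add (h : IsAtiyahTensor ρ tt) (a : A) (v : V) (m : M) :
    tt (a, v) m = h.unit (a • m) + tt (0, v) m := by
  rw [unit_apply, ← h.tt_mk_zero, ← h.add_left, Prod.mk_add_mk, add_zero, zero_add]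

theorem tt_zero_smul (h : IsAtiyahTensor ρ tt) (a : A) (v : V) (m : M) :
    tt (0, v) (a • m) = a • tt (0, v) m + h.unit (ρ v a • m) := by
  rw [← h.balanced, zero_mul, zero_add, h.tt_eq_unit_add, h.smul, mul_zero, add_comm]

theorem exists_pairing (h : IsAtiyahTensor ρ tt) (x : (V →ₗ[A] A) × A) (δ : Dual A M) :
    ∃ g : Dual A T, ∀ (a : A) (v : V) (m : M),
      g (tt (a, v) m) = a * (x.2 * δ m) + ρ v (x.2 * δ m) - x.1 v * δ m := by
  obtain ⟨g, hg⟩ := h.exists_linearMap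
    (fun s m => s.1 * (x.2 * δ m) + ρ s.2 (x.2 * δ m) - x.1 s.2 * δ m)
    (fun s s' m => by simp only [Prod.fst_add, Prod.snd_add, map_add, Derivation.add_apply]; ring)
    (fun s m m' => by simp only [map_add, mul_add]; ring)
    (fun b a v m => by
      simp only [map_smul, smul_eq_mul, Derivation.smul_apply, mul_left_comm x.2 a,
        Derivation.leibniz]
      ring)
    (fun a b v m => by simp only [map_smul, smul_eq_mul, Derivation.smul_apply]; ring)
  exact ⟨g, fun a v => hg (a, v)⟩

noncomputable def pairing (h : IsAtiyahTensor ρ tt) (x : (V →ₗ[A] A) × A) (δ : Dual A M) :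
    Dual A T :=
  (h.exists_pairing x δ).choose

theorem pairing_apply (h : IsAtiyahTensor ρ tt) (x : (V →ₗ[A] A) × A) (δ : Dual A M) (a : A)
    (v : V) (m : M) :
    h.pairing x δ (tt (a, v) m) = a * (x.2 * δ m) + ρ v (x.2 * δ m) - x.1 v * δ m :=
  (h.exists_pairing x δ).choose_spec a v m

theorem surjective_dualMap_unit (h : IsAtiyahTensor ρ tt) :
    Function.Surjective h.unit.dualMap := fun δ =>
  ⟨h.pairing (0, 1) δ, by ext m; simp [unit_apply, pairing_apply]⟩

section Projection

variable {piT : T →ₗ[A] V ⊗[A] M}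

/-- A functional `g` killing `M` descends to `v ⊗ m ↦ g ((0, v) ⊗ m)`, which is balanced because
`g` kills the correction term of `tt_zero_smul`. -/
theorem exact_dualMap (h : IsAtiyahTensor ρ tt)
    (hpi : ∀ (a : A) (v : V) (m : M), piT (tt (a, v) m) = v ⊗ₜ m) :
    Function.Exact piT.dualMap h.unit.dualMap := by
  intro g
  constructor
  · intro hg
    have hg' (m : M) : g (h.unit m) = 0 := LinearMap.congr_fun hg m
    refine ⟨lift (LinearMap.mk₂ A (fun v m => g (tt (0, v) m)) (fun v v' m => ?_)
      (fun a v m => ?_) (fun v m m' => ?_) (fun a v m => ?_)), ?_⟩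
    · rw [← map_add, ← h.add_left, Prod.mk_add_mk, add_zero]
    · rw [← map_smul, h.smul, mul_zero]
    · rw [h.add_right, map_add]
    · rw [h.tt_zero_smul, map_add, hg', add_zero, map_smul]
    · refine h.linearMap_ext fun ⟨a, v⟩ m => ?_
      rw [LinearMap.dualMap_apply, hpi, lift.tmul, LinearMap.mk₂_apply, h.tt_eq_unit_add a,
        map_add, hg', zero_add]
  · rintro ⟨φ, rfl⟩
    ext m
    simp [unit_apply, hpi]

theorem shortExact_dual (h : IsAtiyahTensor ρ tt)
    (hpi : ∀ (a : A) (v : V) (m : M), piT (tt (a, v) m) = v ⊗ₜ m) :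
    Function.Injective piT.dualMap ∧ Function.Exact piT.dualMap h.unit.dualMap ∧
      Function.Surjective h.unit.dualMap :=
  ⟨LinearMap.dualMap_injective_of_surjective
    (surjective_of_tmul_mem_range fun v m => ⟨tt (0, v) m, hpi 0 v m⟩),
    h.exact_dualMap hpi, h.surjective_dualMap_unit⟩

end Projection

end IsAtiyahTensor

end AtiyahTensor

section DualAtiyahTensor

variable {k A V M T3 : Type u} [CommRing k] [CommRing A] [Algebra k A]
  [AddCommGroup V] [Module A V] [AddCommGroup M] [Module A M] [AddCommGroup T3] [Module A T3]

/-- `tt3 x δ` models `x ⊗ δ` in `Σ_V^* ⊗_A M^*`, balanced against the natural right action on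
`Σ_V^*` and with the `A`-module structure coming from the twisted left action. -/
structure IsDualAtiyahTensor (ρ : V →ₗ[A] Derivation k A A)
    (tt3 : (V →ₗ[A] A) × A → Dual A M → T3) : Prop where
  add_left : ∀ x x' δ, tt3 (x + x') δ = tt3 x δ + tt3 x' δ
  add_right : ∀ x δ δ', tt3 x (δ + δ') = tt3 x δ + tt3 x δ'
  balanced : ∀ (a : A) (θ : V →ₗ[A] A) (b : A) (δ : Dual A M),
    tt3 (a • θ, b * a) δ = tt3 (θ, b) (a • δ)
  smul : ∀ (a : A) (θ : V →ₗ[A] A) (b : A) (δ : Dual A M),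
    a • tt3 (θ, b) δ = tt3 (a • θ + b • rhoStar ρ a, a * b) δ
  exists_unique_lift : ∀ (N : Type u) [AddCommGroup N] (f : (V →ₗ[A] A) × A → Dual A M → N),
    (∀ x x' δ, f (x + x') δ = f x δ + f x' δ) → (∀ x δ δ', f x (δ + δ') = f x δ + f x δ') →
    (∀ (a : A) (θ : V →ₗ[A] A) (b : A) (δ : Dual A M), f (a • θ, b * a) δ = f (θ, b) (a • δ)) →
    ∃! F : T3 →+ N, ∀ x δ, F (tt3 x δ) = f x δ

namespace IsDualAtiyahTensor

variable {ρ : V →ₗ[A] Derivation k A A} {tt3 : (V →ₗ[A] A) × A → Dual A M → T3}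

theorem addMonoidHom_ext (h : IsDualAtiyahTensor ρ tt3) {N : Type u} [AddCommGroup N]
    {F₁ F₂ : T3 →+ N} (hF : ∀ x δ, F₁ (tt3 x δ) = F₂ (tt3 x δ)) : F₁ = F₂ := by
  obtain ⟨F, -, huniq⟩ := h.exists_unique_lift N (fun x δ => F₂ (tt3 x δ))
    (fun x x' δ => by rw [h.add_left, map_add]) (fun x δ δ' => by rw [h.add_right, map_add])
    (fun a θ b δ => by rw [h.balanced])
  exact (huniq F₁ hF).trans (huniq F₂ fun _ _ => rfl).symm

theorem linearMap_ext (h : IsDualAtiyahTensor ρ tt3) {N : Type u} [AddCommGroup N] [Module A N]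
    {F₁ F₂ : T3 →ₗ[A] N} (hF : ∀ x δ, F₁ (tt3 x δ) = F₂ (tt3 x δ)) : F₁ = F₂ :=
  LinearMap.toAddMonoidHom_injective (h.addMonoidHom_ext hF)

theorem exists_linearMap (h : IsDualAtiyahTensor ρ tt3) {N : Type u} [AddCommGroup N]
    [Module A N] (f : (V →ₗ[A] A) × A → Dual A M → N)
    (add_left : ∀ x x' δ, f (x + x') δ = f x δ + f x' δ)
    (add_right : ∀ x δ δ', f x (δ + δ') = f x δ + f x δ')
    (balanced : ∀ (a : A) (θ : V →ₗ[A] A) (b : A) (δ : Dual A M),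
      f (a • θ, b * a) δ = f (θ, b) (a • δ))
    (smul : ∀ (a : A) (θ : V →ₗ[A] A) (b : A) (δ : Dual A M),
      f (a • θ + b • rhoStar ρ a, a * b) δ = a • f (θ, b) δ) :
    ∃ F : T3 →ₗ[A] N, ∀ x δ, F (tt3 x δ) = f x δ := by
  obtain ⟨F, hF, -⟩ := h.exists_unique_lift N f add_left add_right balanced
  have map_smul (a : A) : F.comp (DistribSMul.toAddMonoidHom T3 a) =
      (DistribSMul.toAddMonoidHom N a).comp F :=
    h.addMonoidHom_ext fun ⟨θ, b⟩ δ => by simp [h.smul, hF, smul]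
  exact ⟨{ F with map_smul' := fun a t => DFunLike.congr_fun (map_smul a) t }, hF⟩

theorem exists_addMonoidHom_tmul (h : IsDualAtiyahTensor ρ tt3) :
    ∃ F : T3 →+ (V →ₗ[A] A) ⊗[A] Dual A M, ∀ θ b δ, F (tt3 (θ, b) δ) = θ ⊗ₜ δ := by
  obtain ⟨F, hF, -⟩ := h.exists_unique_lift _ (fun x δ => x.1 ⊗ₜ[A] δ)
    (fun x x' δ => add_tmul _ _ _) (fun x δ δ' => tmul_add _ _ _)
    (fun a θ b δ => smul_tmul _ _ _)
  exact ⟨F, fun θ b => hF (θ, b)⟩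

theorem tt3_zero_one_smul (h : IsDualAtiyahTensor ρ tt3) (b : A) (δ : Dual A M) :
    tt3 (0, 1) (b • δ) = tt3 (0, b) δ := by
  rw [← h.balanced, smul_zero, one_mul]

theorem shortExact (h : IsDualAtiyahTensor ρ tt3) {m1 : (V →ₗ[A] A) ⊗[A] Dual A M →ₗ[A] T3}
    (hm1 : ∀ θ δ, m1 (θ ⊗ₜ δ) = tt3 (θ, 0) δ) {m2 : T3 →ₗ[A] Dual A M}
    (hm2 : ∀ θ b δ, m2 (tt3 (θ, b) δ) = b • δ) :
    Function.Injective m1 ∧ Function.Exact m1 m2 ∧ Function.Surjective m2 := by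
  obtain ⟨F, hF⟩ := h.exists_addMonoidHom_tmul
  have hFm1 (p) : F (m1 p) = p := by
    induction p using TensorProduct.induction_on with
    | zero => rw [map_zero, map_zero]
    | tmul θ δ => rw [hm1, hF]
    | add p q hp hq => rw [map_add, map_add, hp, hq]
  have hm2m1 (p) : m2 (m1 p) = 0 := by
    induction p using TensorProduct.induction_on with
    | zero => rw [map_zero, map_zero]
    | tmul θ δ => rw [hm1, hm2, zero_smul]
    | add p q hp hq => rw [map_add, map_add, hp, hq, add_zero]
  let unitSection : Dual A M →+ T3 := AddMonoidHom.mk' (tt3 (0, 1)) (h.add_right _)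
  have hsplit (y : T3) : m1 (F y) + unitSection (m2 y) = y := by
    have := h.addMonoidHom_ext (F₁ := m1.toAddMonoidHom.comp F +
      unitSection.comp m2.toAddMonoidHom) (F₂ := AddMonoidHom.id T3) fun ⟨θ, b⟩ δ => by
        simp [unitSection, hF, hm1, hm2, h.tt3_zero_one_smul, ← h.add_left]
    exact DFunLike.congr_fun this y
  refine ⟨fun p q hpq => by rw [← hFm1 p, ← hFm1 q, hpq], fun y => ⟨fun hy => ⟨F y, ?_⟩, ?_⟩,
    fun δ => ⟨tt3 (0, 1) δ, by rw [hm2, one_smul]⟩⟩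
  · simpa [hy] using hsplit y
  · rintro ⟨p, rfl⟩
    exact hm2m1 p

end IsDualAtiyahTensor

end DualAtiyahTensor

theorem IsAtiyahTensor.exists_pairingMap {k A V M T T3 : Type u} [CommRing k] [CommRing A]
    [Algebra k A] [AddCommGroup V] [Module A V] [AddCommGroup M] [Module A M] [AddCommGroup T]
    [Module A T] [AddCommGroup T3] [Module A T3] {ρ : V →ₗ[A] Derivation k A A}
    {tt : A × V → M → T} {tt3 : (V →ₗ[A] A) × A → Dual A M → T3}
    (hT : IsAtiyahTensor ρ tt) (hT3 : IsDualAtiyahTensor ρ tt3) :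
    ∃ G : T3 →ₗ[A] Dual A T, ∀ x δ, G (tt3 x δ) = hT.pairing x δ := by
  refine hT3.exists_linearMap hT.pairing
    (fun x x' δ => hT.linearMap_ext fun ⟨a, v⟩ m => ?_)
    (fun x δ δ' => hT.linearMap_ext fun ⟨a, v⟩ m => ?_)
    (fun c θ b δ => hT.linearMap_ext fun ⟨a, v⟩ m => ?_)
    (fun c θ b δ => hT.linearMap_ext fun ⟨a, v⟩ m => ?_)
  · simp only [LinearMap.add_apply, hT.pairing_apply, Prod.fst_add, Prod.snd_add, add_mul,
      map_add]
    ring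
  · simp only [LinearMap.add_apply, hT.pairing_apply, mul_add, map_add]
    ring
  · simp only [LinearMap.smul_apply, hT.pairing_apply, smul_eq_mul, mul_assoc]
    ring
  · have hr : rhoStar ρ c v = ρ v c := rfl
    simp only [LinearMap.smul_apply, LinearMap.add_apply, hT.pairing_apply, smul_eq_mul, hr,
      mul_assoc c b, Derivation.leibniz]
    ring

theorem stmt_10_general (k A V M T T3 : Type u) [Field k] [CommRing A] [Algebra k A]
    [AddCommGroup V] [Module A V] [Module.Finite A V] [Module.Projective A V]
    [AddCommGroup M] [Module A M]
    [AddCommGroup T] [Module A T] [AddCommGroup T3] [Module A T3]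
    (ρ : V →ₗ[A] Derivation k A A)
    -- `T` realizes `Σ_V ⊗_A M` with the `A`-structure from the left action on `Σ_V`
    (tt : (A × V) → M → T)
    (tt_addl : ∀ (s s' : A × V) (m : M), tt (s + s') m = tt s m + tt s' m)
    (tt_addr : ∀ (s : A × V) (m m' : M), tt s (m + m') = tt s m + tt s m')
    (tt_bal : ∀ (b a : A) (v : V) (m : M),
      tt (b * a + ρ v a, a • v) m = tt (b, v) (a • m))
    (tt_mod : ∀ (a b : A) (v : V) (m : M), a • tt (b, v) m = tt (a * b, a • v) m)
    (tt_univ : ∀ (N : Type u) [AddCommGroup N] (f : (A × V) → M → N),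
      (∀ (s s' : A × V) (m : M), f (s + s') m = f s m + f s' m) →
      (∀ (s : A × V) (m m' : M), f s (m + m') = f s m + f s m') →
      (∀ (b a : A) (v : V) (m : M), f (b * a + ρ v a, a • v) m = f (b, v) (a • m)) →
      ∃! F : T →+ N, ∀ s m, F (tt s m) = f s m)
    -- the two maps of the Atiyah sequence of `M`
    (unitT : M →ₗ[A] T) (hunit : ∀ m : M, unitT m = tt (1, 0) m)
    (piT : T →ₗ[A] V ⊗[A] M)
    (hpi : ∀ (a : A) (v : V) (m : M), piT (tt (a, v) m) = v ⊗ₜ[A] m)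
    -- `T3` realizes `Σ_V^* ⊗_A M^*`, balanced against the natural right `A`-action on
    -- `Σ_V^*`, with the `A`-module structure from the twisted left `A`-action
    (tt3 : ((V →ₗ[A] A) × A) → Module.Dual A M → T3)
    (tt3_addl : ∀ (x x' : (V →ₗ[A] A) × A) (δ : Module.Dual A M),
      tt3 (x + x') δ = tt3 x δ + tt3 x' δ)
    (tt3_addr : ∀ (x : (V →ₗ[A] A) × A) (δ δ' : Module.Dual A M),
      tt3 x (δ + δ') = tt3 x δ + tt3 x δ')
    (tt3_bal : ∀ (a : A) (θ : V →ₗ[A] A) (b : A) (δ : Module.Dual A M),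
      tt3 (a • θ, b * a) δ = tt3 (θ, b) (a • δ))
    (tt3_mod : ∀ (a : A) (θ : V →ₗ[A] A) (b : A) (δ : Module.Dual A M),
      a • tt3 (θ, b) δ = tt3 (a • θ + b • rhoStar ρ a, a * b) δ)
    (tt3_univ : ∀ (N : Type u) [AddCommGroup N]
      (f : ((V →ₗ[A] A) × A) → Module.Dual A M → N),
      (∀ x x' δ, f (x + x') δ = f x δ + f x' δ) →
      (∀ x δ δ', f x (δ + δ') = f x δ + f x δ') →
      (∀ (a : A) (θ : V →ₗ[A] A) (b : A) (δ : Module.Dual A M),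
        f (a • θ, b * a) δ = f (θ, b) (a • δ)) →
      ∃! F : T3 →+ N, ∀ x δ, F (tt3 x δ) = f x δ)
    -- the two maps of the sequence `0 → V^* ⊗ M^* → Σ_V^* ⊗ M^* → M^* → 0`
    (m1 : (V →ₗ[A] A) ⊗[A] (Module.Dual A M) →ₗ[A] T3)
    (hm1 : ∀ (θ : V →ₗ[A] A) (δ : Module.Dual A M), m1 (θ ⊗ₜ[A] δ) = tt3 (θ, 0) δ)
    (m2 : T3 →ₗ[A] Module.Dual A M)
    (hm2 : ∀ (θ : V →ₗ[A] A) (b : A) (δ : Module.Dual A M),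
      m2 (tt3 (θ, b) δ) = b • δ) :
    -- the dual of the Atiyah sequence is exact
    (Function.Injective piT.dualMap ∧
      (∀ g : Module.Dual A T, unitT.dualMap g = 0 ↔ g ∈ LinearMap.range piT.dualMap) ∧
      Function.Surjective unitT.dualMap) ∧
    -- the sequence `0 → V^* ⊗_A M^* → Σ_V^* ⊗_A M^* → M^* → 0` is exact
    (Function.Injective m1 ∧
      (∀ y : T3, m2 y = 0 ↔ y ∈ LinearMap.range m1) ∧
      Function.Surjective m2) ∧
    -- the two short exact sequences are isomorphic
    (∃ (f1 : Module.Dual A (V ⊗[A] M) →ₗ[A] (V →ₗ[A] A) ⊗[A] (Module.Dual A M))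
      (f2 : Module.Dual A T →ₗ[A] T3),
      Function.Bijective f1 ∧ Function.Bijective f2 ∧
      (∀ g : Module.Dual A (V ⊗[A] M), f2 (piT.dualMap g) = m1 (f1 g)) ∧
      (∀ h : Module.Dual A T, m2 (f2 h) = unitT.dualMap h)) := by
  have hT : IsAtiyahTensor ρ tt := ⟨tt_addl, tt_addr, tt_bal, tt_mod, tt_univ⟩
  have hT3 : IsDualAtiyahTensor ρ tt3 := ⟨tt3_addl, tt3_addr, tt3_bal, tt3_mod, tt3_univ⟩
  obtain rfl : unitT = hT.unit := LinearMap.ext hunit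
  have exact₁ := hT.shortExact_dual hpi
  have exact₂ := hT3.shortExact hm1 hm2
  obtain ⟨G, hG⟩ := hT.exists_pairingMap hT3
  let e₁ : ((V →ₗ[A] A) ⊗[A] Dual A M) ≃ₗ[A] Dual A (V ⊗[A] M) :=
    (LinearEquiv.ofBijective (dualDistrib A V M) dualDistrib_bijective).trans (.neg A)
  have hc₁ : piT.dualMap ∘ₗ e₁.toLinearMap = G ∘ₗ m1 :=
    TensorProduct.ext' fun θ δ => hT.linearMap_ext fun ⟨a, v⟩ m => by
      simp [e₁, hG, hm1, hpi, hT.pairing_apply]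
  have hc₂ : hT.unit.dualMap ∘ₗ G = LinearMap.id ∘ₗ m2 :=
    hT3.linearMap_ext fun ⟨θ, b⟩ δ => by
      ext m
      simp [hG, hm2, hT.unit_apply, hT.pairing_apply]
  let e₂ := LinearEquiv.ofBijective G <|
    LinearMap.bijective_of_shortExact_of_bijective_of_bijective
      (M₁ := (V →ₗ[A] A) ⊗[A] Dual A M) hc₁ hc₂ exact₂ exact₁
      e₁.bijective Function.bijective_id
  refine ⟨exact₁, exact₂, e₁.symm, e₂.symm, e₁.symm.bijective, e₂.symm.bijective,
    fun g => e₂.injective ?_, fun g => ?_⟩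
  · simpa [e₂] using LinearMap.congr_fun hc₁ (e₁.symm g)
  · simpa [e₂] using (LinearMap.congr_fun hc₂ (e₂.symm g)).symm

/-- Let `(V,ρ)` be an anchored `A`-module with `V` finitely generated projective, and `M`
any `A`-module.  Let `T` (with `tt`, `unitT`, `piT`) be a realization of `Σ_V ⊗_A M` with
its Atiyah sequence, and let `T3` (with `tt3`) be a realization of `Σ_V^* ⊗_A M^*`
(balanced against the natural right `A`-action on `Σ_V^* = V^* × A`, with the `A`-module
structure coming from the twisted left `A`-action), with the maps `m1 : θ⊗δ ↦ (θ,0)⊗δ`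
and `m2 : (θ,a)⊗δ ↦ a•δ`.  Then the `A`-linear dual of the Atiyah sequence of `M` is
isomorphic, as a short exact sequence of `A`-modules, to the sequence
`0 → V^* ⊗_A M^* → Σ_V^* ⊗_A M^* → M^* → 0`. -/
theorem stmt_10 (k A V M T T3 : Type u) [Field k] [CharZero k] [CommRing A] [Algebra k A]
    [AddCommGroup V] [Module A V] [Module.Finite A V] [Module.Projective A V]
    [AddCommGroup M] [Module A M]
    [AddCommGroup T] [Module A T] [AddCommGroup T3] [Module A T3]
    (ρ : V →ₗ[A] Derivation k A A)
    -- `T` realizes `Σ_V ⊗_A M` with the `A`-structure from the left action on `Σ_V`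
    (tt : (A × V) → M → T)
    (tt_addl : ∀ (s s' : A × V) (m : M), tt (s + s') m = tt s m + tt s' m)
    (tt_addr : ∀ (s : A × V) (m m' : M), tt s (m + m') = tt s m + tt s m')
    (tt_bal : ∀ (b a : A) (v : V) (m : M),
      tt (b * a + ρ v a, a • v) m = tt (b, v) (a • m))
    (tt_mod : ∀ (a b : A) (v : V) (m : M), a • tt (b, v) m = tt (a * b, a • v) m)
    (tt_univ : ∀ (N : Type u) [AddCommGroup N] (f : (A × V) → M → N),
      (∀ (s s' : A × V) (m : M), f (s + s') m = f s m + f s' m) →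
      (∀ (s : A × V) (m m' : M), f s (m + m') = f s m + f s m') →
      (∀ (b a : A) (v : V) (m : M), f (b * a + ρ v a, a • v) m = f (b, v) (a • m)) →
      ∃! F : T →+ N, ∀ s m, F (tt s m) = f s m)
    -- the two maps of the Atiyah sequence of `M`
    (unitT : M →ₗ[A] T) (hunit : ∀ m : M, unitT m = tt (1, 0) m)
    (piT : T →ₗ[A] V ⊗[A] M)
    (hpi : ∀ (a : A) (v : V) (m : M), piT (tt (a, v) m) = v ⊗ₜ[A] m)
    -- `T3` realizes `Σ_V^* ⊗_A M^*`, balanced against the natural right `A`-action on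
    -- `Σ_V^*`, with the `A`-module structure from the twisted left `A`-action
    (tt3 : ((V →ₗ[A] A) × A) → Module.Dual A M → T3)
    (tt3_addl : ∀ (x x' : (V →ₗ[A] A) × A) (δ : Module.Dual A M),
      tt3 (x + x') δ = tt3 x δ + tt3 x' δ)
    (tt3_addr : ∀ (x : (V →ₗ[A] A) × A) (δ δ' : Module.Dual A M),
      tt3 x (δ + δ') = tt3 x δ + tt3 x δ')
    (tt3_bal : ∀ (a : A) (θ : V →ₗ[A] A) (b : A) (δ : Module.Dual A M),
      tt3 (a • θ, b * a) δ = tt3 (θ, b) (a • δ))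
    (tt3_mod : ∀ (a : A) (θ : V →ₗ[A] A) (b : A) (δ : Module.Dual A M),
      a • tt3 (θ, b) δ = tt3 (a • θ + b • rhoStar ρ a, a * b) δ)
    (tt3_univ : ∀ (N : Type u) [AddCommGroup N]
      (f : ((V →ₗ[A] A) × A) → Module.Dual A M → N),
      (∀ x x' δ, f (x + x') δ = f x δ + f x' δ) →
      (∀ x δ δ', f x (δ + δ') = f x δ + f x δ') →
      (∀ (a : A) (θ : V →ₗ[A] A) (b : A) (δ : Module.Dual A M),
        f (a • θ, b * a) δ = f (θ, b) (a • δ)) →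
      ∃! F : T3 →+ N, ∀ x δ, F (tt3 x δ) = f x δ)
    -- the two maps of the sequence `0 → V^* ⊗ M^* → Σ_V^* ⊗ M^* → M^* → 0`
    (m1 : (V →ₗ[A] A) ⊗[A] (Module.Dual A M) →ₗ[A] T3)
    (hm1 : ∀ (θ : V →ₗ[A] A) (δ : Module.Dual A M), m1 (θ ⊗ₜ[A] δ) = tt3 (θ, 0) δ)
    (m2 : T3 →ₗ[A] Module.Dual A M)
    (hm2 : ∀ (θ : V →ₗ[A] A) (b : A) (δ : Module.Dual A M),
      m2 (tt3 (θ, b) δ) = b • δ) :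
    -- the dual of the Atiyah sequence is exact
    (Function.Injective piT.dualMap ∧
      (∀ g : Module.Dual A T, unitT.dualMap g = 0 ↔ g ∈ LinearMap.range piT.dualMap) ∧
      Function.Surjective unitT.dualMap) ∧
    -- the sequence `0 → V^* ⊗_A M^* → Σ_V^* ⊗_A M^* → M^* → 0` is exact
    (Function.Injective m1 ∧
      (∀ y : T3, m2 y = 0 ↔ y ∈ LinearMap.range m1) ∧
      Function.Surjective m2) ∧
    -- the two short exact sequences are isomorphic
    (∃ (f1 : Module.Dual A (V ⊗[A] M) →ₗ[A] (V →ₗ[A] A) ⊗[A] (Module.Dual A M))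
      (f2 : Module.Dual A T →ₗ[A] T3),
      Function.Bijective f1 ∧ Function.Bijective f2 ∧
      (∀ g : Module.Dual A (V ⊗[A] M), f2 (piT.dualMap g) = m1 (f1 g)) ∧
      (∀ h : Module.Dual A T, m2 (f2 h) = unitT.dualMap h)) :=
  stmt_10_general k A V M T T3 ρ tt tt_addl tt_addr tt_bal tt_mod tt_univ unitT hunit piT hpi tt3
    tt3_addl tt3_addr tt3_bal tt3_mod tt3_univ m1 hm1 m2 hm2
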